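/- arXiv:1012.2192 — 3 statements merged into one kernel-verified Lean document; each statement's English description precedes it below -/
import Mathlib

section
/- Let P be a closed set of positions, n = u_{n,P}(q) the corresponding pattern algebra, and let λ ∈ n* be quasi-monomial. If ⊥S_λ = ∅, then ⊥L_λ = ∅; equivalently, if s¹_λ = n then l¹_λ = n, i.e., λ(XY) = 0 for all X, Y ∈ n. -/
open scoped BigOperators Classical ComplexOrder
open Complex

set_option linter.unusedSectionVars false

noncomputable section

namespace Paper

variable {F : Type*} [Field F]

/-! ### Characters of finite groups -/

/-- `f : G → ℂ` is the character of some finite-dimensional complex representation. -/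
def IsCharacter {G : Type} [Monoid G] (f : G → ℂ) : Prop :=
  ∃ V : FDRep ℂ G, V.character = f

/-- `f : G → ℂ` is the character of some irreducible finite-dimensional complex
representation. -/
def IsIrreducibleCharacter {G : Type} [Monoid G] (f : G → ℂ) : Prop :=
  ∃ V : FDRep ℂ G, CategoryTheory.Simple V ∧ V.character = f

/-- The standard inner product `⟨f, h⟩ = |G|⁻¹ ∑ₓ f x conj (h x)` on complex-valued
functions on a finite group. -/
def cinner (G : Type*) (f h : G → ℂ) : ℂ :=
  (Nat.card G : ℂ)⁻¹ * ∑ᶠ x : G, f x * (starRingEnd ℂ) (h x)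

/-- Induction of a complex-valued function from (the subset underlying) a subgroup `H` of a
finite group `G`, via the Frobenius formula
`Ind_H^G(f)(g) = |H|⁻¹ ∑_{x ∈ G, xgx⁻¹ ∈ H} f (xgx⁻¹)`. -/
def indFun {G : Type*} [Group G] (H : Set G) (f : G → ℂ) : G → ℂ := fun g =>
  (Nat.card H : ℂ)⁻¹ * ∑ᶠ x : G, if x * g * x⁻¹ ∈ H then f (x * g * x⁻¹) else 0

/-- The set of elements of the `m`-th cyclotomic field `ℚ(ζ_m) ⊆ ℂ`, where
`ζ_m = exp (2πi/m)`. -/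
def cycField (m : ℕ) : Set ℂ :=
  (Algebra.adjoin ℚ {Complex.exp (2 * Real.pi * Complex.I / m)} : Subalgebra ℚ ℂ)

/-! ### Algebra groups of matrix algebras -/

variable {n : ℕ}

/-- The subgroup `1 + S` of invertible matrices, for `S` a non-unital subalgebra of the
matrix algebra (for example the algebra of strictly upper triangular matrices). -/
def grp [Fintype F] (S : NonUnitalSubalgebra F (Matrix (Fin n) (Fin n) F)) :
    Subgroup (Matrix (Fin n) (Fin n) F)ˣ where
  carrier := {g | (g : Matrix (Fin n) (Fin n) F) - 1 ∈ S}
  one_mem' := by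
    show ((1 : (Matrix (Fin n) (Fin n) F)ˣ) : Matrix (Fin n) (Fin n) F) - 1 ∈ S
    rw [Units.val_one, sub_self]; exact zero_mem S
  mul_mem' := by
    intro a b ha hb
    show ((a * b : (Matrix (Fin n) (Fin n) F)ˣ) : Matrix (Fin n) (Fin n) F) - 1 ∈ S
    have h : ((a * b : (Matrix (Fin n) (Fin n) F)ˣ) : Matrix (Fin n) (Fin n) F) - 1 =
        ((a : Matrix (Fin n) (Fin n) F) - 1) + ((b : Matrix (Fin n) (Fin n) F) - 1) +
          ((a : Matrix (Fin n) (Fin n) F) - 1) * ((b : Matrix (Fin n) (Fin n) F) - 1) := by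
      rw [Units.val_mul]; noncomm_ring
    rw [h]
    exact add_mem (add_mem ha hb) (mul_mem ha hb)
  inv_mem' := by
    intro a ha
    show ((a⁻¹ : (Matrix (Fin n) (Fin n) F)ˣ) : Matrix (Fin n) (Fin n) F) - 1 ∈ S
    have hpow : ∀ m : ℕ, ((a ^ m : (Matrix (Fin n) (Fin n) F)ˣ) : Matrix (Fin n) (Fin n) F)
        - 1 ∈ S := by
      intro m
      induction m with
      | zero => rw [pow_zero, Units.val_one, sub_self]; exact zero_mem S
      | succ m ih =>
          rw [pow_succ, Units.val_mul]
          have h : ((a ^ m : (Matrix (Fin n) (Fin n) F)ˣ) : Matrix (Fin n) (Fin n) F) *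
              (a : Matrix (Fin n) (Fin n) F) - 1 =
              (((a ^ m : (Matrix (Fin n) (Fin n) F)ˣ) : Matrix (Fin n) (Fin n) F) - 1) +
              ((a : Matrix (Fin n) (Fin n) F) - 1) +
              (((a ^ m : (Matrix (Fin n) (Fin n) F)ˣ) : Matrix (Fin n) (Fin n) F) - 1) *
              ((a : Matrix (Fin n) (Fin n) F) - 1) := by noncomm_ring
          rw [h]
          exact add_mem (add_mem ih ha) (mul_mem ih ha)
    have hk : 0 < orderOf a := orderOf_pos a
    have hinv : a⁻¹ = a ^ (orderOf a - 1) := by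
      have h1 : a ^ (orderOf a - 1) * a = 1 := by
        rw [← pow_succ, Nat.sub_add_cancel hk, pow_orderOf_eq_one]
      exact (eq_inv_of_mul_eq_one_left h1).symm
    rw [hinv]
    exact hpow _

variable [Fintype F] {S : NonUnitalSubalgebra F (Matrix (Fin n) (Fin n) F)}

lemma mem_grp_iff {g : (Matrix (Fin n) (Fin n) F)ˣ} :
    g ∈ grp S ↔ (g : Matrix (Fin n) (Fin n) F) - 1 ∈ S := Iff.rfl

/-- The underlying matrix of an element of an algebra group. -/
def mat (g : ↥(grp S)) : Matrix (Fin n) (Fin n) F :=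
  ((g : (Matrix (Fin n) (Fin n) F)ˣ) : Matrix (Fin n) (Fin n) F)

lemma mat_mem (g : ↥(grp S)) : mat g - 1 ∈ S := g.2

/-- `g - 1` as an element of the algebra `S`. -/
def gsub (g : ↥(grp S)) : ↥S := ⟨mat g - 1, mat_mem g⟩

/-- The dual space of `F`-linear functionals on the algebra `S`. -/
abbrev Dual (S : NonUnitalSubalgebra F (Matrix (Fin n) (Fin n) F)) := ↥S →ₗ[F] F

/-- The function `θ_λ(g) = θ(λ(g-1))` on the algebra group `1 + S`. -/
def thetaFun (θ : AddChar F ℂ) (lam : Dual S) : ↥(grp S) → ℂ := fun g => θ (lam (gsub g))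

lemma conj_mem (a b : ↥(grp S)) {X : Matrix (Fin n) (Fin n) F} (hX : X ∈ S) :
    mat a * X * mat b ∈ S := by
  have h : mat a * X * mat b =
      X + (mat a - 1) * X + X * (mat b - 1) + (mat a - 1) * X * (mat b - 1) := by noncomm_ring
  rw [h]
  exact add_mem (add_mem (add_mem hX (mul_mem (mat_mem a) hX)) (mul_mem hX (mat_mem b)))
    (mul_mem (mul_mem (mat_mem a) hX) (mat_mem b))

/-- The functional `X ↦ λ(a · X · b)`, used to define the various actions of an algebra group
on the dual space of its algebra. -/
def conjDual (a b : ↥(grp S)) (lam : Dual S) : Dual S where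
  toFun X := lam ⟨mat a * (X : Matrix (Fin n) (Fin n) F) * mat b, conj_mem a b X.2⟩
  map_add' X Y := by
    try dsimp only
    rw [← map_add]
    exact congrArg lam (Subtype.ext (by simp [mul_add, add_mul]))
  map_smul' c X := by
    try dsimp only
    rw [RingHom.id_apply, ← map_smul]
    exact congrArg lam (Subtype.ext (by simp [Matrix.mul_smul, Matrix.smul_mul]))

/-- The left orbit `Gλ` of `λ` under `(gλ)(X) = λ(g⁻¹X)`. -/
def leftOrbit (lam : Dual S) : Set (Dual S) := {ν | ∃ g : ↥(grp S), ν = conjDual g⁻¹ 1 lam}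

/-- The two-sided orbit `GλG` of `λ` under `(gλh)(X) = λ(g⁻¹Xh⁻¹)`. -/
def biOrbit (lam : Dual S) : Set (Dual S) := {ν | ∃ g h : ↥(grp S), ν = conjDual g⁻¹ h⁻¹ lam}

/-- The coadjoint orbit of `λ` under `λ^g(X) = λ(gXg⁻¹)`. -/
def coadjOrbit (lam : Dual S) : Set (Dual S) := {ν | ∃ g : ↥(grp S), ν = conjDual g g⁻¹ lam}

/-- The supercharacter `χ_λ = (|Gλ|/|GλG|) ∑_{ν ∈ GλG} θ_ν`. -/
def superChar (θ : AddChar F ℂ) (lam : Dual S) : ↥(grp S) → ℂ := fun g =>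
  ((Nat.card (leftOrbit lam) : ℂ) / (Nat.card (biOrbit lam) : ℂ)) *
    ∑ᶠ ν ∈ biOrbit lam, thetaFun θ ν g

/-- The Kirillov function `ψ_λ = |λ^G|^{-1/2} ∑_{ν ∈ λ^G} θ_ν`. -/
def kirillov (θ : AddChar F ℂ) (lam : Dual S) : ↥(grp S) → ℂ := fun g =>
  ((Real.sqrt (Nat.card (coadjOrbit lam)) : ℂ))⁻¹ * ∑ᶠ ν ∈ coadjOrbit lam, thetaFun θ ν g


/-! ### The strictly upper triangular algebra -/

/-- The `F`-algebra of strictly upper triangular `n × n` matrices. -/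
def uAlg (n : ℕ) (F : Type*) [Field F] :
    NonUnitalSubalgebra F (Matrix (Fin n) (Fin n) F) :=
  Submodule.toNonUnitalSubalgebra
    { carrier := {M | ∀ i j : Fin n, j ≤ i → M i j = 0}
      add_mem' := fun ha hb i j hij => by
        rw [Matrix.add_apply, ha i j hij, hb i j hij, add_zero]
      zero_mem' := fun i j _ => rfl
      smul_mem' := fun c a ha i j hij => by
        rw [Matrix.smul_apply, ha i j hij, smul_zero] }
    (by
      intro X Y hX hY i j hij
      rw [Matrix.mul_apply]
      refine Finset.sum_eq_zero fun k _ => ?_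
      by_cases hk : k ≤ i
      · rw [hX i k hk, zero_mul]
      · rw [hY k j (hij.trans (not_le.mp hk).le), mul_zero])

lemma mem_uAlg {M : Matrix (Fin n) (Fin n) F} :
    M ∈ uAlg n F ↔ ∀ i j : Fin n, j ≤ i → M i j = 0 := Iff.rfl

/-! ### The chain of subspaces `l^i ⊆ ⋯ ⊆ s^i` attached to a linear functional -/

section Chain

variable {A : Type*} [NonUnitalRing A] [Module F A] [SMulCommClass F A A] [IsScalarTower F A A]

/-- For subspaces `s, t` of an algebra, the subspace `{x ∈ s | λ(x·t) = 0}`. -/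
def lker (lam : A →ₗ[F] F) (s t : Submodule F A) : Submodule F A where
  carrier := {x | x ∈ s ∧ ∀ y ∈ t, lam (x * y) = 0}
  add_mem' := fun ha hb => ⟨s.add_mem ha.1 hb.1, fun y hy => by
    rw [add_mul, map_add, ha.2 y hy, hb.2 y hy, add_zero]⟩
  zero_mem' := ⟨s.zero_mem, fun y _ => by rw [zero_mul, map_zero]⟩
  smul_mem' := fun c a ha => ⟨s.smul_mem c ha.1, fun y hy => by
    rw [smul_mul_assoc, map_smul, ha.2 y hy, smul_zero]⟩

/-- The pair of subspaces `(l^i, s^i)` defined inductively by `l⁰ = 0`, `s⁰ = n`,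
`l^{i+1} = {X ∈ s^i : λ(X·s^i) = 0}`, `s^{i+1} = {X ∈ s^i : λ(X·l^{i+1}) = 0}`. -/
def chain (lam : A →ₗ[F] F) : ℕ → Submodule F A × Submodule F A
  | 0 => (⊥, ⊤)
  | i + 1 =>
    (lker lam (chain lam i).2 (chain lam i).2,
     lker lam (chain lam i).2 (lker lam (chain lam i).2 (chain lam i).2))

/-- The subspace `l^i_λ`. -/
def lC (lam : A →ₗ[F] F) (i : ℕ) : Submodule F A := (chain lam i).1

/-- The subspace `s^i_λ`. -/
def sC (lam : A →ₗ[F] F) (i : ℕ) : Submodule F A := (chain lam i).2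

/-- The terminal subspace `l̄_λ` of the ascending chain `l¹ ⊆ l² ⊆ ⋯`. -/
def lbar (lam : A →ₗ[F] F) : Submodule F A := ⨆ i, lC lam i

/-- The terminal subspace `s̄_λ` of the descending chain `s¹ ⊇ s² ⊇ ⋯`. -/
def sbar (lam : A →ₗ[F] F) : Submodule F A := ⨅ i, sC lam i

end Chain

/-- The underlying set of the algebra subgroup `L̄_λ = 1 + l̄_λ`. -/
def Lset (lam : Dual S) : Set ↥(grp S) := {g | gsub g ∈ lbar lam}

/-- The underlying set of the algebra subgroup `S̄_λ = 1 + s̄_λ`. -/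
def Sset (lam : Dual S) : Set ↥(grp S) := {g | gsub g ∈ sbar lam}

/-- The character `ξ_λ = Ind_{L̄_λ}^G (θ_λ)`. -/
def xiChar (θ : AddChar F ℂ) (lam : Dual S) : ↥(grp S) → ℂ :=
  indFun (Lset lam) (thetaFun θ lam)

/-! ### Quasi-monomial functionals and shapes -/

/-- The value `λ_{ij} = λ(e_{ij})` (interpreted as `0` when `e_{ij} ∉ S`). -/
def lamEntry (lam : Dual S) (i j : Fin n) : F :=
  if h : Matrix.single i j (1 : F) ∈ S then lam ⟨_, h⟩ else 0

/-- A functional is quasi-monomial if the matrix `(λ_{ij})` has at most one nonzero entry in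
each row and in each column. -/
def QuasiMonomial (lam : Dual S) : Prop :=
  (∀ i j k : Fin n, lamEntry lam i j ≠ 0 → lamEntry lam i k ≠ 0 → j = k) ∧
  (∀ i j k : Fin n, lamEntry lam i k ≠ 0 → lamEntry lam j k ≠ 0 → i = j)

/-- The parts of the shape of `λ`: the equivalence classes of the finest equivalence
relation for which `i ∼ j` whenever `λ_{ij} ≠ 0`. -/
def shapeClasses (lam : Dual S) : Set (Set (Fin n)) :=
  {s | ∃ i : Fin n,
    s = {j | Relation.EqvGen (fun a b => lamEntry lam a b ≠ 0 ∨ lamEntry lam b a ≠ 0) i j}}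

/-! ### Explicit functionals -/

/-- The linear functional on `S` determined by a matrix `c` of coefficients:
`X ↦ ∑_{i,j} c_{ij} X_{ij}`; it sends the elementary matrix `e_{ij}` to `c_{ij}`. -/
def lamOf (S : NonUnitalSubalgebra F (Matrix (Fin n) (Fin n) F))
    (c : Matrix (Fin n) (Fin n) F) : Dual S where
  toFun X := ∑ i : Fin n, ∑ j : Fin n, c i j * (X : Matrix (Fin n) (Fin n) F) i j
  map_add' X Y := by
    simp [Matrix.add_apply, mul_add, Finset.sum_add_distrib]
  map_smul' a X := by
    simp only [RingHom.id_apply, smul_eq_mul, Finset.mul_sum]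
    refine Finset.sum_congr rfl fun i _ => Finset.sum_congr rfl fun j _ => ?_
    have : ((a • X : ↥S) : Matrix (Fin n) (Fin n) F) i j
        = a * (X : Matrix (Fin n) (Fin n) F) i j := by
      simp [Matrix.smul_apply]
    rw [this]; ring

/-- The coordinate functional `e*_{ij} : X ↦ X_{ij}` on `S`. -/
def coordFn (S : NonUnitalSubalgebra F (Matrix (Fin n) (Fin n) F))
    (a : Fin n × Fin n) : Dual S where
  toFun X := (X : Matrix (Fin n) (Fin n) F) a.1 a.2
  map_add' X Y := by simp
  map_smul' c X := by simp

/-- Matrix entry in (1-based) coordinates, `0` when out of range. -/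
def ent (X : Matrix (Fin n) (Fin n) F) (a : ℕ × ℕ) : F :=
  if h : 1 ≤ a.1 ∧ a.1 ≤ n ∧ 1 ≤ a.2 ∧ a.2 ≤ n then
    X ⟨a.1 - 1, by omega⟩ ⟨a.2 - 1, by omega⟩ else 0


/-! ### The specific functional `λ` on `u_{n}(q)` from Section 3.3 of the paper -/

/-- The coefficient matrix of the functional `λ` (positions written 1-based). -/
def lamCoef (r n : ℕ) (F : Type*) [Field F] : Matrix (Fin n) (Fin n) F := fun a b =>
  let j := (a : ℕ) + 1
  let k := (b : ℕ) + 1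
  if 1 ≤ j ∧ j ≤ r ∧ k = j + r then -1
  else if 1 ≤ j ∧ j ≤ r ∧ k = j + 2 * r then 1
  else if r + 1 ≤ j ∧ j ≤ 2 * r ∧ k = j + 2 * r + 1 then -1
  else if r + 1 ≤ j ∧ j ≤ 2 * r ∧ k = j + 3 * r + 1 then 1
  else if 2 * r + 1 ≤ j ∧ j ≤ 3 * r + 1 ∧ k = j + r then 1
  else if 3 * r + 2 ≤ j ∧ j ≤ 4 * r + 1 ∧ k = j + 2 * r then 1
  else 0

/-- The linear functional `λ ∈ u_n(q)*` of the paper, determined by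
`λ(e_{jk}) = -1` if `j = k - r ∈ [1,r]`, `λ(e_{jk}) = 1` if `j = k - 2r ∈ [1,r]`,
`λ(e_{jk}) = -1` if `j = k - 2r - 1 ∈ [r+1,2r]`, `λ(e_{jk}) = 1` if `j = k - 3r - 1 ∈ [r+1,2r]`,
`λ(e_{jk}) = 1` if `j = k - r ∈ [2r+1,3r+1]`, `λ(e_{jk}) = 1` if `j = k - 2r ∈ [3r+2,4r+1]`,
and `λ(e_{jk}) = 0` otherwise. -/
def lamStd (r n : ℕ) (F : Type*) [Field F] [Fintype F] : Dual (uAlg n F) :=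
  lamOf (uAlg n F) (lamCoef r n F)

/-! ### Pattern algebras -/

/-- A set of positions is closed when `(i,j) ∈ P` and `(j,k) ∈ P` imply `(i,k) ∈ P`. -/
def IsClosedPositions {n : ℕ} (P : Set (Fin n × Fin n)) : Prop :=
  ∀ i j k : Fin n, (i, j) ∈ P → (j, k) ∈ P → (i, k) ∈ P

/-- The subspace of matrices supported on a set `P` of positions. -/
def patSub (n : ℕ) (F : Type*) [Field F] (P : Set (Fin n × Fin n)) :
    Submodule F (Matrix (Fin n) (Fin n) F) where
  carrier := {M | ∀ i j : Fin n, (i, j) ∉ P → M i j = 0}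
  add_mem' := fun ha hb i j hij => by
    rw [Matrix.add_apply, ha i j hij, hb i j hij, add_zero]
  zero_mem' := fun i j _ => rfl
  smul_mem' := fun c a ha i j hij => by rw [Matrix.smul_apply, ha i j hij, smul_zero]

/-- The pattern algebra `u_{n,P}(q)` of matrices supported on a closed set `P` of
positions. -/
def patAlg (n : ℕ) (F : Type*) [Field F] (P : Set (Fin n × Fin n))
    (hC : IsClosedPositions P) : NonUnitalSubalgebra F (Matrix (Fin n) (Fin n) F) :=
  (patSub n F P).toNonUnitalSubalgebra (by
    intro X Y hX hY
    intro i j hij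
    rw [Matrix.mul_apply]
    refine Finset.sum_eq_zero fun k _ => ?_
    by_cases hik : (i, k) ∈ P
    · by_cases hkj : (k, j) ∈ P
      · exact absurd (hC i k j hik hkj) hij
      · rw [hY k j hkj, mul_zero]
    · rw [hX i k hik, zero_mul])


/-! ### The algebra `a_n(q)` of superdiagonal-constant strictly upper triangular matrices -/

/-- Membership condition for `a_n(q)` : strictly upper triangular, and constant along each
superdiagonal. -/
def aCond {n : ℕ} (M : Matrix (Fin n) (Fin n) F) : Prop :=
  (∀ i j : Fin n, j ≤ i → M i j = 0) ∧
  ∀ i j i' j' : Fin n, (i : ℕ) < j → (i' : ℕ) < j' →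
    (i : ℕ) + (j' : ℕ) = (i' : ℕ) + (j : ℕ) → M i j = M i' j'

lemma aCond_mul {n : ℕ} {X Y : Matrix (Fin n) (Fin n) F}
    (hX : aCond X) (hY : aCond Y) : aCond (X * Y) := by
  obtain ⟨hXu, hXc⟩ := hX
  obtain ⟨hYu, hYc⟩ := hY
  have hupper : ∀ i j : Fin n, j ≤ i → (X * Y) i j = 0 := by
    intro i j hij
    rw [Matrix.mul_apply]
    refine Finset.sum_eq_zero fun k _ => ?_
    by_cases hk : k ≤ i
    · rw [hXu i k hk, zero_mul]
    · rw [hYu k j (hij.trans (not_le.mp hk).le), mul_zero]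
  refine ⟨hupper, ?_⟩
  intro i j i' j' hij hij' hsum
  rw [Matrix.mul_apply, Matrix.mul_apply]
  have h1 : ∀ k : Fin n, ¬((i : ℕ) < (k : ℕ) ∧ (k : ℕ) < (j : ℕ)) → X i k * Y k j = 0 := by
    intro k hk
    by_cases h : (i : ℕ) < (k : ℕ)
    · have hjk : j ≤ k := by rw [Fin.le_def]; omega
      rw [hYu k j hjk, mul_zero]
    · have hki : k ≤ i := by rw [Fin.le_def]; omega
      rw [hXu i k hki, zero_mul]
  have h2 : ∀ k : Fin n, ¬((i' : ℕ) < (k : ℕ) ∧ (k : ℕ) < (j' : ℕ)) → X i' k * Y k j' = 0 := by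
    intro k hk
    by_cases h : (i' : ℕ) < (k : ℕ)
    · have hjk : j' ≤ k := by rw [Fin.le_def]; omega
      rw [hYu k j' hjk, mul_zero]
    · have hki : k ≤ i' := by rw [Fin.le_def]; omega
      rw [hXu i' k hki, zero_mul]
  have e1 : ∑ k : Fin n, X i k * Y k j
      = ∑ k ∈ Finset.univ.filter (fun k : Fin n => (i : ℕ) < (k : ℕ) ∧ (k : ℕ) < (j : ℕ)),
        X i k * Y k j := by
    refine (Finset.sum_filter_of_ne fun k _ hk => ?_).symm
    by_contra hp
    exact hk (h1 k hp)
  have e2 : ∑ k : Fin n, X i' k * Y k j'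
      = ∑ k ∈ Finset.univ.filter (fun k : Fin n => (i' : ℕ) < (k : ℕ) ∧ (k : ℕ) < (j' : ℕ)),
        X i' k * Y k j' := by
    refine (Finset.sum_filter_of_ne fun k _ hk => ?_).symm
    by_contra hp
    exact hk (h2 k hp)
  rw [e1, e2]
  refine Finset.sum_bij'
    (fun (k : Fin n) (hk : k ∈ Finset.univ.filter
        (fun k : Fin n => (i : ℕ) < (k : ℕ) ∧ (k : ℕ) < (j : ℕ))) =>
      (⟨(i' : ℕ) + ((k : ℕ) - (i : ℕ)), by
        have h1 := (Finset.mem_filter.mp hk).2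
        have h2 := j'.isLt
        omega⟩ : Fin n))
    (fun (m : Fin n) (hm : m ∈ Finset.univ.filter
        (fun m : Fin n => (i' : ℕ) < (m : ℕ) ∧ (m : ℕ) < (j' : ℕ))) =>
      (⟨(i : ℕ) + ((m : ℕ) - (i' : ℕ)), by
        have h1 := (Finset.mem_filter.mp hm).2
        have h2 := j.isLt
        omega⟩ : Fin n))
    ?_ ?_ ?_ ?_ ?_
  · intro k hk
    have h1 := (Finset.mem_filter.mp hk).2
    simp only [Finset.mem_filter, Finset.mem_univ, true_and]
    constructor
    · omega
    · omega
  · intro m hm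
    have h1 := (Finset.mem_filter.mp hm).2
    simp only [Finset.mem_filter, Finset.mem_univ, true_and]
    constructor
    · omega
    · omega
  · intro k hk
    have h1 := (Finset.mem_filter.mp hk).2
    exact Fin.ext (by simp only [Fin.val_mk]; omega)
  · intro m hm
    have h1 := (Finset.mem_filter.mp hm).2
    exact Fin.ext (by simp only [Fin.val_mk]; omega)
  · intro k hk
    have h1 := (Finset.mem_filter.mp hk).2
    have hx : X i k = X i' ⟨(i' : ℕ) + ((k : ℕ) - (i : ℕ)), by
        have h2 := j'.isLt; omega⟩ := by
      refine hXc i k i' _ h1.1 ?_ ?_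
      · simp only [Fin.val_mk]; omega
      · simp only [Fin.val_mk]; omega
    have hy : Y k j = Y ⟨(i' : ℕ) + ((k : ℕ) - (i : ℕ)), by
        have h2 := j'.isLt; omega⟩ j' := by
      refine hYc k j _ j' h1.2 ?_ ?_
      · simp only [Fin.val_mk]; omega
      · simp only [Fin.val_mk]; omega
    rw [hx, hy]

/-- The algebra `a_n(q)` of strictly upper triangular matrices that are constant along each
superdiagonal. -/
def aAlg (n : ℕ) (F : Type*) [Field F] [Fintype F] :
    NonUnitalSubalgebra F (Matrix (Fin n) (Fin n) F) :=
  Submodule.toNonUnitalSubalgebra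
    { carrier := {M | aCond M}
      add_mem' := by
        rintro a b ⟨hau, hac⟩ ⟨hbu, hbc⟩
        refine ⟨fun i j hij => by rw [Matrix.add_apply, hau i j hij, hbu i j hij, add_zero],
          fun i j i' j' h1 h2 h3 => ?_⟩
        rw [Matrix.add_apply, Matrix.add_apply, hac i j i' j' h1 h2 h3,
          hbc i j i' j' h1 h2 h3]
      zero_mem' := ⟨fun i j _ => rfl, fun _ _ _ _ _ _ _ => rfl⟩
      smul_mem' := by
        rintro c a ⟨hau, hac⟩
        refine ⟨fun i j hij => by rw [Matrix.smul_apply, hau i j hij, smul_zero],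
          fun i j i' j' h1 h2 h3 => ?_⟩
        rw [Matrix.smul_apply, Matrix.smul_apply, hac i j i' j' h1 h2 h3] }
    (fun X Y hX hY => aCond_mul hX hY)

lemma mem_aAlg {M : Matrix (Fin n) (Fin n) F} : M ∈ aAlg n F ↔ aCond M := Iff.rfl


/-- Iterated product `a * b₁ * ⋯ * b_k` of elements of a (non-unital) algebra. -/
def mulChain {A : Type*} [Mul A] : A → List A → A
  | a, [] => a
  | a, b :: l => mulChain (a * b) l

/-! ### Algebra groups of abstract nilpotent algebras, via the unitization -/

section AlgebraGroup

variable (F : Type) [Field F] (A : Type) [NonUnitalRing A] [Module F A]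
  [SMulCommClass F A A] [IsScalarTower F A A]

/-- The algebra `A` is nilpotent: some power `A^k` vanishes, i.e. all products of `k`
elements of `A` are zero. -/
def IsNilpotentAlgebra : Prop :=
  ∃ k : ℕ, ∀ (a : A) (l : List A), l.length + 1 = k → mulChain a l = 0

/-- The algebra group `G = 1 + A`, realized as the group of units of the unitization
`F ⊕ A` whose scalar component equals `1` (for `A` nilpotent these are exactly the
elements `1 + X`, `X ∈ A`). -/
def algGrp : Subgroup (Unitization F A)ˣ where
  carrier := {u | ((u : Unitization F A)).fst = 1}
  one_mem' := by simp
  mul_mem' := by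
    intro a b ha hb
    show ((a * b : (Unitization F A)ˣ) : Unitization F A).fst = 1
    rw [Units.val_mul, Unitization.fst_mul]
    rw [Set.mem_setOf_eq] at ha hb
    rw [ha, hb, one_mul]
  inv_mem' := by
    intro a ha
    rw [Set.mem_setOf_eq] at ha
    show ((a⁻¹ : (Unitization F A)ˣ) : Unitization F A).fst = 1
    have h : ((a : Unitization F A) * ((a⁻¹ : (Unitization F A)ˣ) : Unitization F A)).fst
        = (1 : Unitization F A).fst := by
      rw [Units.mul_inv]
    rw [Unitization.fst_mul, ha, one_mul, Unitization.fst_one] at h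
    exact h

variable {F A}

/-- The element `g - 1 ∈ A` for `g` in the algebra group `1 + A`. -/
def sndU (g : ↥(algGrp F A)) : A := ((g : (Unitization F A)ˣ) : Unitization F A).snd

/-- The function `θ_λ(g) = θ(λ(g - 1))` on the algebra group `1 + A`. -/
def thetaFunU (θ : AddChar F ℂ) (lam : A →ₗ[F] F) : ↥(algGrp F A) → ℂ := fun g =>
  θ (lam (sndU g))

/-- The coadjoint action: `λ^g(X) = λ(g X g⁻¹)`. -/
def coadjU (g : ↥(algGrp F A)) (lam : A →ₗ[F] F) : A →ₗ[F] F where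
  toFun X := lam ((((g : (Unitization F A)ˣ) : Unitization F A) * (X : Unitization F A) *
    ((((g : (Unitization F A)ˣ))⁻¹ : (Unitization F A)ˣ) : Unitization F A)).snd)
  map_add' X Y := by
    try dsimp only
    rw [← map_add, ← Unitization.snd_add]
    refine congrArg lam (congrArg (fun x : Unitization F A => x.snd) ?_)
    rw [Unitization.inr_add]
    noncomm_ring
  map_smul' c X := by
    try dsimp only
    rw [RingHom.id_apply, ← map_smul, ← Unitization.snd_smul]
    refine congrArg lam (congrArg (fun x : Unitization F A => x.snd) ?_)
    rw [Unitization.inr_smul, mul_smul_comm, smul_mul_assoc]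

/-- The coadjoint orbit of `λ`. -/
def coadjOrbitU (lam : A →ₗ[F] F) : Set (A →ₗ[F] F) :=
  {nu | ∃ g : ↥(algGrp F A), nu = coadjU g lam}

/-- The Kirillov function `ψ_λ` of the algebra group `1 + A`. -/
def kirillovU (θ : AddChar F ℂ) (lam : A →ₗ[F] F) : ↥(algGrp F A) → ℂ := fun g =>
  ((Real.sqrt (Nat.card (coadjOrbitU lam)) : ℂ))⁻¹ *
    ∑ᶠ nu ∈ coadjOrbitU lam, thetaFunU θ nu g

/-- The underlying set of the algebra subgroup `L̄_λ = 1 + l̄_λ`. -/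
def LsetU (lam : A →ₗ[F] F) : Set ↥(algGrp F A) := {g | sndU g ∈ lbar lam}

/-- The underlying set of the algebra subgroup `S̄_λ = 1 + s̄_λ`. -/
def SsetU (lam : A →ₗ[F] F) : Set ↥(algGrp F A) := {g | sndU g ∈ sbar lam}

/-- The character `ξ_λ = Ind_{L̄_λ}^G(θ_λ)` of the algebra group `1 + A`. -/
def xiU (θ : AddChar F ℂ) (lam : A →ₗ[F] F) : ↥(algGrp F A) → ℂ :=
  indFun (LsetU lam) (thetaFunU θ lam)

/-- The set `Ξ_λ = {gλsg⁻¹ : g ∈ G, s ∈ S̄_λ}`, i.e. the functionals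
`ν(X) = λ(g⁻¹ X g s⁻¹)`. -/
def XiSet (lam : A →ₗ[F] F) : Set (A →ₗ[F] F) :=
  {nu | ∃ g s : ↥(algGrp F A), s ∈ SsetU lam ∧ ∀ X : A,
    nu X = lam (((((g : (Unitization F A)ˣ))⁻¹ : (Unitization F A)ˣ) * (X : Unitization F A) *
      ((g : (Unitization F A)ˣ) : Unitization F A) *
      ((((s : (Unitization F A)ˣ))⁻¹ : (Unitization F A)ˣ) : Unitization F A)).snd)}

end AlgebraGroup


/-- The right orbit `λG` of `λ` under `(λg)(X) = λ(Xg⁻¹)`. -/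
def rightOrbit {n : ℕ} {F : Type*} [Field F] [Fintype F]
    {S : NonUnitalSubalgebra F (Matrix (Fin n) (Fin n) F)} (lam : Dual S) : Set (Dual S) :=
  {nu | ∃ g : ↥(grp S), nu = conjDual 1 g⁻¹ lam}

/-- The set `⊥L_λ = {(i,j) ∈ P : ∃ k, λ_{ik} ≠ 0 and (j,k) ∈ P}`. -/
def perpL {n : ℕ} {F : Type*} [Field F] [Fintype F] (P : Set (Fin n × Fin n))
    {S : NonUnitalSubalgebra F (Matrix (Fin n) (Fin n) F)} (lam : Dual S) :
    Set (Fin n × Fin n) :=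
  {a | a ∈ P ∧ ∃ k : Fin n, lamEntry lam a.1 k ≠ 0 ∧ (a.2, k) ∈ P}

/-- The set `⊥S_λ = {(i,j) ∈ P : ∃ k, λ_{ik} ≠ 0, (j,k) ∈ P, (j,k) ∉ ⊥L_λ}`. -/
def perpS {n : ℕ} {F : Type*} [Field F] [Fintype F] (P : Set (Fin n × Fin n))
    {S : NonUnitalSubalgebra F (Matrix (Fin n) (Fin n) F)} (lam : Dual S) :
    Set (Fin n × Fin n) :=
  {a | a ∈ P ∧ ∃ k : Fin n, lamEntry lam a.1 k ≠ 0 ∧ (a.2, k) ∈ P ∧ (a.2, k) ∉ perpL P lam}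

end Paper

/-!
Expand `λ(Z) = ∑ Z_ij λ_ij`. A term `X_ij Y_jk λ_ik` of `λ(XY)` can only be nonzero when
`(i,j) ∈ ⊥L_λ` (closedness of `P` puts `(i,j)` and `(j,k)` in `P`), so `λ(XY) = 0` as soon as `X`
vanishes on `⊥L_λ`: hence `⊥L_λ = ∅` gives `l¹_λ = n`, and `e_jk ∈ l¹_λ` for `(j,k) ∉ ⊥L_λ`.
If `s¹_λ = n` and `(i,j) ∈ ⊥S_λ` with witness `k`, then `λ_ik = λ(e_ij e_jk) = 0`, a
contradiction; so `⊥S_λ = ∅`. Finally, when `⊥S_λ = ∅`, every `(i,j) ∈ ⊥L_λ` with witness `k`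
forces `(j,k) ∈ ⊥L_λ` with `j < k`, which is impossible for an element of `⊥L_λ` with largest
column.
-/

namespace Paper

section FirstTerms

variable {F A : Type*} [Field F] [NonUnitalRing A] [Module F A] [IsScalarTower F A A]
  {lam : A →ₗ[F] F}

lemma mem_lC_one_iff {x : A} : x ∈ lC lam 1 ↔ ∀ y, lam (x * y) = 0 :=
  ⟨fun h y => h.2 y trivial, fun h => ⟨trivial, fun y _ => h y⟩⟩

lemma mem_sC_one_iff {x : A} : x ∈ sC lam 1 ↔ ∀ y ∈ lC lam 1, lam (x * y) = 0 :=
  ⟨fun h => h.2, fun h => ⟨trivial, h⟩⟩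

end FirstTerms

section PatternAlgebra

variable {F : Type*} [Field F] {n : ℕ} {P : Set (Fin n × Fin n)} {hC : IsClosedPositions P}

lemma single_mem_patAlg {i j : Fin n} (h : (i, j) ∈ P) (c : F) :
    Matrix.single i j c ∈ patAlg n F P hC := by
  intro a b hab
  rw [Matrix.single_apply, ite_eq_right_iff]
  rintro ⟨rfl, rfl⟩
  exact absurd h hab

lemma single_apply_mem_patAlg (Z : patAlg n F P hC) (i j : Fin n) :
    Matrix.single i j ((Z : Matrix (Fin n) (Fin n) F) i j) ∈ patAlg n F P hC := by
  by_cases h : (i, j) ∈ P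
  · exact single_mem_patAlg h _
  · rw [Z.2 i j h, Matrix.single_zero]
    exact zero_mem _

lemma lamEntry_eq_of_mem (lam : Dual (patAlg n F P hC)) {i j : Fin n} (h : (i, j) ∈ P) :
    lamEntry lam i j = lam ⟨Matrix.single i j 1, single_mem_patAlg h 1⟩ :=
  dif_pos _

lemma map_single_apply (lam : Dual (patAlg n F P hC)) (Z : patAlg n F P hC) (i j : Fin n) :
    lam ⟨_, single_apply_mem_patAlg Z i j⟩ =
      (Z : Matrix (Fin n) (Fin n) F) i j * lamEntry lam i j := by
  by_cases h : (i, j) ∈ P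
  · have hsmul : (⟨_, single_apply_mem_patAlg Z i j⟩ : patAlg n F P hC) =
        (Z : Matrix (Fin n) (Fin n) F) i j • ⟨Matrix.single i j 1, single_mem_patAlg h 1⟩ :=
      Subtype.ext (by simp [Matrix.smul_single])
    rw [hsmul, map_smul, lamEntry_eq_of_mem lam h, smul_eq_mul]
  · simp only [Z.2 i j h, Matrix.single_zero, zero_mul]
    exact map_zero lam

lemma map_eq_sum_mul_lamEntry (lam : Dual (patAlg n F P hC)) (Z : patAlg n F P hC) :
    lam Z = ∑ i, ∑ j, (Z : Matrix (Fin n) (Fin n) F) i j * lamEntry lam i j := by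
  have hZ : Z = ∑ i, ∑ j, (⟨_, single_apply_mem_patAlg Z i j⟩ : patAlg n F P hC) := by
    apply Subtype.ext
    simpa only [AddSubmonoidClass.coe_finsetSum] using
      Matrix.matrix_eq_sum_single (Z : Matrix (Fin n) (Fin n) F)
  conv_lhs => rw [hZ]
  simp only [map_sum, map_single_apply]

lemma map_eq_zero_of_lamEntry (lam : Dual (patAlg n F P hC)) (Z : patAlg n F P hC)
    (h : ∀ i j, lamEntry lam i j ≠ 0 → (Z : Matrix (Fin n) (Fin n) F) i j = 0) : lam Z = 0 := by
  rw [map_eq_sum_mul_lamEntry]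
  refine Finset.sum_eq_zero fun i _ => Finset.sum_eq_zero fun j _ => ?_
  by_cases hij : lamEntry lam i j = 0
  · rw [hij, mul_zero]
  · rw [h i j hij, zero_mul]

variable [Fintype F]

lemma map_mul_eq_zero_of_perpL (lam : Dual (patAlg n F P hC)) (X Y : patAlg n F P hC)
    (hX : ∀ a ∈ perpL P lam, (X : Matrix (Fin n) (Fin n) F) a.1 a.2 = 0) : lam (X * Y) = 0 := by
  refine map_eq_zero_of_lamEntry lam _ fun i k hik => ?_
  change ((X : Matrix (Fin n) (Fin n) F) * (Y : Matrix (Fin n) (Fin n) F)) i k = 0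
  rw [Matrix.mul_apply]
  refine Finset.sum_eq_zero fun j _ => ?_
  by_cases hij : (i, j) ∈ P
  · by_cases hjk : (j, k) ∈ P
    · rw [hX (i, j) ⟨hij, k, hik, hjk⟩, zero_mul]
    · rw [Y.2 j k hjk, mul_zero]
  · rw [X.2 i j hij, zero_mul]

lemma lC_one_eq_top_of_perpL_eq_empty (lam : Dual (patAlg n F P hC)) (h : perpL P lam = ∅) :
    lC lam 1 = ⊤ :=
  eq_top_iff.2 fun X _ => mem_lC_one_iff.2 fun Y =>
    map_mul_eq_zero_of_perpL lam X Y (by simp [h])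

lemma single_mem_lC_one (lam : Dual (patAlg n F P hC)) {j k : Fin n} (hjk : (j, k) ∈ P)
    (hL : (j, k) ∉ perpL P lam) :
    (⟨Matrix.single j k 1, single_mem_patAlg hjk 1⟩ : patAlg n F P hC) ∈ lC lam 1 := by
  refine mem_lC_one_iff.2 fun Y => map_mul_eq_zero_of_perpL lam _ Y fun a ha => ?_
  change Matrix.single j k (1 : F) a.1 a.2 = 0
  rw [Matrix.single_apply, ite_eq_right_iff]
  rintro ⟨rfl, rfl⟩
  exact absurd ha hL

lemma perpS_eq_empty_of_sC_one_eq_top (lam : Dual (patAlg n F P hC)) (hs : sC lam 1 = ⊤) :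
    perpS P lam = ∅ := by
  refine Set.eq_empty_of_forall_notMem ?_
  rintro ⟨i, j⟩ ⟨hij, k, hik, hjk, hL⟩
  have hsingle : (⟨Matrix.single i j 1, single_mem_patAlg hij 1⟩ : patAlg n F P hC) ∈
      sC lam 1 := hs ▸ Submodule.mem_top
  have hzero := mem_sC_one_iff.1 hsingle _ (single_mem_lC_one lam hjk hL)
  apply hik
  rw [lamEntry_eq_of_mem lam (hC i j k hij hjk), ← hzero]
  congr 1
  exact Subtype.ext (by simp [Matrix.single_mul_single_same])

lemma perpL_eq_empty_of_perpS_eq_empty (hP : ∀ a ∈ P, a.1 < a.2) (lam : Dual (patAlg n F P hC))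
    (hS : perpS P lam = ∅) : perpL P lam = ∅ := by
  by_contra hne
  obtain ⟨⟨i, j⟩, ⟨hij, k, hik, hjk⟩, hmax⟩ := Set.exists_max_image (perpL P lam) Prod.snd
    (Set.toFinite _) (Set.nonempty_iff_ne_empty.2 hne)
  have hjkL : (j, k) ∈ perpL P lam := by
    by_contra hL
    exact Set.eq_empty_iff_forall_notMem.1 hS (i, j) ⟨hij, k, hik, hjk, hL⟩
  exact absurd (hmax _ hjkL) (not_le.2 (hP _ hjk))

end PatternAlgebra

theorem statement9_general (F : Type) [Field F] [Fintype F]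
    (n : ℕ) (P : Set (Fin n × Fin n)) (hP : ∀ a ∈ P, a.1 < a.2) (hC : IsClosedPositions P)
    (lam : Dual (patAlg n F P hC)) :
    (perpS P lam = ∅ → perpL P lam = ∅) ∧
    (sC lam 1 = ⊤ → lC lam 1 = ⊤) ∧
    (sC lam 1 = ⊤ → ∀ X Y : ↥(patAlg n F P hC), lam (X * Y) = 0) := by
  have hL (hs : sC lam 1 = ⊤) : lC lam 1 = ⊤ :=
    lC_one_eq_top_of_perpL_eq_empty lam
      (perpL_eq_empty_of_perpS_eq_empty hP lam (perpS_eq_empty_of_sC_one_eq_top lam hs))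
  exact ⟨perpL_eq_empty_of_perpS_eq_empty hP lam, hL,
    fun hs X Y => mem_lC_one_iff.1 (hL hs ▸ Submodule.mem_top) Y⟩

/-- For a quasi-monomial `λ` on a pattern algebra, if `⊥S_λ = ∅` then
`⊥L_λ = ∅`; equivalently, if `s¹_λ = n` then `l¹_λ = n`, i.e. `λ(XY) = 0` for all
`X, Y ∈ n`. -/
theorem statement9 (p : ℕ) (hp : p.Prime) (F : Type) [Field F] [Fintype F] [CharP F p]
    (n : ℕ) (P : Set (Fin n × Fin n)) (hP : ∀ a ∈ P, a.1 < a.2) (hC : IsClosedPositions P)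
    (lam : Dual (patAlg n F P hC)) (hqm : QuasiMonomial lam) :
    (perpS P lam = ∅ → perpL P lam = ∅) ∧
    (sC lam 1 = ⊤ → lC lam 1 = ⊤) ∧
    (sC lam 1 = ⊤ → ∀ X Y : ↥(patAlg n F P hC), lam (X * Y) = 0) :=
  statement9_general F n P hP hC lam

end Paper
end
end

section
/- Let n > 1. The Kirillov function ψ_κ of A_n(q) equals the function θ_κ : A_n(q) → ℂ given by θ_κ(g) = θ(g_{1,n}), and ψ_κ is a character of A_n(q) if and only if n = 2 (equivalently, g ↦ θ(g_{1,n}) is a group homomorphism A_n(q) → ℂ^× if and only if n = 2). -/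
open scoped BigOperators Classical ComplexOrder
open Complex

set_option linter.unusedSectionVars false

noncomputable section

namespace Paper

variable {F : Type*} [Field F]

/-! ### Algebra groups of matrix algebras -/

variable {n : ℕ}

variable [Fintype F] {S : NonUnitalSubalgebra F (Matrix (Fin n) (Fin n) F)}

/-- The functional `κ ∈ a_n(q)*`, `κ(X) = X_{1,n}`. -/
def kappaDual (n : ℕ) (hn : 1 < n) (F : Type) [Field F] [Fintype F] : Dual (aAlg n F) :=
  coordFn (aAlg n F) (⟨0, by omega⟩, ⟨n - 1, by omega⟩)

/-! Because `a_n(q)` is commutative, the coadjoint action of `A_n(q)` is trivial, so the orbit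
of `κ` is `{κ}` and `ψ_κ = θ_κ`. For `g = 1 + X`, `h = 1 + Y` one has
`θ_κ(gh) = θ_κ(g) θ_κ(h) θ(κ(XY))`, so `θ_κ` is a homomorphism iff `θ(κ(XY)) = 1` for all
`X, Y ∈ a_n(q)`. For `n = 2` all products `XY` vanish; for `n ≥ 3`, `X = cJ` and `Y = J^{n-2}`
(`J` the nilpotent Jordan block) give `κ(XY) = c`, and `θ` is nontrivial. Finally, a function
with value `1` at the identity is a character iff it is a homomorphism to `ℂˣ`, since its
representation is then one-dimensional. -/

section AlgebraGroupOfSubalgebra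

lemma mat_one : mat (1 : ↥(grp S)) = 1 := rfl

lemma mat_mul (g h : ↥(grp S)) : mat (g * h) = mat g * mat h := rfl

lemma mat_mul_mat_inv (g : ↥(grp S)) : mat g * mat g⁻¹ = 1 := Units.mul_inv _

lemma gsub_one : gsub (1 : ↥(grp S)) = 0 :=
  Subtype.ext (by simp only [gsub, mat_one, sub_self, ZeroMemClass.coe_zero])

lemma gsub_mul (g h : ↥(grp S)) : gsub (g * h) = gsub g + gsub h + gsub g * gsub h :=
  Subtype.ext (by
    simp only [gsub, mat_mul, NonUnitalSubalgebra.coe_add, NonUnitalSubalgebra.coe_mul]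
    noncomm_ring)

lemma thetaFun_one (θ : AddChar F ℂ) (lam : Dual S) : thetaFun θ lam 1 = 1 := by
  rw [thetaFun, gsub_one, map_zero, AddChar.map_zero_eq_one]

lemma thetaFun_mul (θ : AddChar F ℂ) (lam : Dual S) (g h : ↥(grp S)) :
    thetaFun θ lam (g * h) = thetaFun θ lam g * thetaFun θ lam h * θ (lam (gsub g * gsub h)) := by
  simp only [thetaFun, gsub_mul, map_add, AddChar.map_add_eq_mul]

lemma conjDual_self_inv_of_commute (hS : ∀ X ∈ S, ∀ Y ∈ S, Commute X Y) (g : ↥(grp S))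
    (lam : Dual S) : conjDual g g⁻¹ lam = lam := by
  ext X
  have hg : Commute (mat g) X := by
    simpa using (hS _ (mat_mem g) _ X.2).add_left (Commute.one_left _)
  refine congrArg lam (Subtype.ext ?_)
  show mat g * X * mat g⁻¹ = X
  rw [hg.eq, mul_assoc, mat_mul_mat_inv, mul_one]

lemma coadjOrbit_eq_singleton_of_commute (hS : ∀ X ∈ S, ∀ Y ∈ S, Commute X Y) (lam : Dual S) :
    coadjOrbit lam = {lam} := by
  refine Set.eq_singleton_iff_unique_mem.2 ⟨⟨1, ?_⟩, ?_⟩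
  · exact (conjDual_self_inv_of_commute hS 1 lam).symm
  · rintro _ ⟨g, rfl⟩
    exact conjDual_self_inv_of_commute hS g lam

lemma kirillov_eq_thetaFun_of_commute (hS : ∀ X ∈ S, ∀ Y ∈ S, Commute X Y)
    (θ : AddChar F ℂ) (lam : Dual S) : kirillov θ lam = thetaFun θ lam := by
  funext g
  rw [kirillov, coadjOrbit_eq_singleton_of_commute hS, finsum_mem_singleton, Nat.card_unique]
  simp

lemma gsub_surjective (hS : S ≤ uAlg n F) : Function.Surjective (gsub : ↥(grp S) → ↥S) := by
  intro X
  have hdet : (1 + (X : Matrix (Fin n) (Fin n) F)).det = 1 := by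
    have hX := hS X.2
    rw [Matrix.det_of_isUpperTriangular fun i j hji => by
      rw [Matrix.add_apply, Matrix.one_apply_ne (ne_of_gt hji : i ≠ j), hX i j hji.le, add_zero]]
    simp [hX _ _ le_rfl]
  have hunit : IsUnit (1 + (X : Matrix (Fin n) (Fin n) F)) :=
    (Matrix.isUnit_iff_isUnit_det _).2 (hdet ▸ isUnit_one)
  refine ⟨⟨hunit.unit, ?_⟩, ?_⟩
  · rw [mem_grp_iff, IsUnit.unit_spec, add_sub_cancel_left]
    exact X.2
  · exact Subtype.ext (add_sub_cancel_left _ _)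

lemma exists_monoidHom_thetaFun_iff (hS : S ≤ uAlg n F) (θ : AddChar F ℂ) (lam : Dual S) :
    (∃ φ : ↥(grp S) →* ℂˣ, ∀ g, thetaFun θ lam g = φ g) ↔ ∀ X Y : ↥S, θ (lam (X * Y)) = 1 := by
  constructor
  · rintro ⟨φ, hφ⟩ X Y
    obtain ⟨g, rfl⟩ := gsub_surjective hS X
    obtain ⟨h, rfl⟩ := gsub_surjective hS Y
    have hmul := thetaFun_mul θ lam g h
    rw [hφ, hφ, hφ, map_mul, Units.val_mul] at hmul
    exact (mul_eq_left₀ (mul_ne_zero (φ g).ne_zero (φ h).ne_zero)).1 hmul.symm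
  · intro h
    let f : ↥(grp S) →* ℂ :=
      { toFun := thetaFun θ lam
        map_one' := thetaFun_one θ lam
        map_mul' := fun g g' => by rw [thetaFun_mul, h, mul_one] }
    exact ⟨f.toHomUnits, fun _ => rfl⟩

end AlgebraGroupOfSubalgebra

lemma _root_.LinearMap.trace_mul_of_finrank_eq_one {K M : Type*} [Field K] [AddCommGroup M]
    [Module K M] [FiniteDimensional K M] (hM : Module.finrank K M = 1) (f g : M →ₗ[K] M) :
    LinearMap.trace K M (f * g) = LinearMap.trace K M f * LinearMap.trace K M g := by
  obtain ⟨a, rfl, -⟩ := f.existsUnique_eq_smul_id_of_finrank_eq_one hM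
  obtain ⟨b, rfl, -⟩ := g.existsUnique_eq_smul_id_of_finrank_eq_one hM
  simp [← Module.End.one_eq_id, LinearMap.trace_one, hM, mul_comm]

lemma isCharacter_iff_exists_monoidHom {G : Type} [Group G] {f : G → ℂ} (h1 : f 1 = 1) :
    IsCharacter f ↔ ∃ φ : G →* ℂˣ, ∀ g, f g = φ g := by
  constructor
  · rintro ⟨V, rfl⟩
    have hV : Module.finrank ℂ V = 1 := by exact_mod_cast (FDRep.char_one V).symm.trans h1
    let χ : G →* ℂ :=
      { toFun := V.character
        map_one' := h1
        map_mul' := fun g h => by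
          simp only [FDRep.character, map_mul, LinearMap.trace_mul_of_finrank_eq_one hV] }
    exact ⟨χ.toHomUnits, fun _ => rfl⟩
  · rintro ⟨φ, hφ⟩
    let ρ : Representation ℂ G ℂ :=
      (Algebra.lsmul ℂ ℂ ℂ).toMonoidHom.comp ((Units.coeHom ℂ).comp φ)
    refine ⟨FDRep.of ρ, funext fun g => ?_⟩
    show LinearMap.trace ℂ ℂ ((φ g : ℂ) • LinearMap.id) = f g
    simp [hφ]

section SuperdiagonalConstant

lemma mul_apply_eq_sum_Ioo {X Y : Matrix (Fin n) (Fin n) F} (hX : X ∈ uAlg n F)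
    (hY : Y ∈ uAlg n F) (i j : Fin n) : (X * Y) i j = ∑ k ∈ Finset.Ioo i j, X i k * Y k j := by
  rw [Matrix.mul_apply]
  refine (Finset.sum_subset (Finset.subset_univ _) fun k _ hk => ?_).symm
  rw [Finset.mem_Ioo, not_and_or, not_lt, not_lt] at hk
  rcases hk with hk | hk
  · rw [hX i k hk, zero_mul]
  · rw [hY k j hk, mul_zero]

lemma aAlg_le_uAlg : aAlg n F ≤ uAlg n F := fun _ hX => hX.1

lemma commute_of_mem_aAlg {X Y : Matrix (Fin n) (Fin n) F} (hX : X ∈ aAlg n F)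
    (hY : Y ∈ aAlg n F) : Commute X Y := by
  refine Matrix.ext fun i j => ?_
  rw [mul_apply_eq_sum_Ioo hX.1 hY.1, mul_apply_eq_sum_Ioo hY.1 hX.1]
  have hj := j.isLt
  -- the reflection `k ↦ i + j - k` of the interval `(i, j)` matches the two sums termwise
  let σ (k : Fin n) (hk : k ∈ Finset.Ioo i j) : Fin n :=
    ⟨i + j - k, by simp only [Finset.mem_Ioo, Fin.lt_def] at hk; omega⟩
  have hσ (k : Fin n) (hk : k ∈ Finset.Ioo i j) :
      X i k * Y k j = Y i (σ k hk) * X (σ k hk) j := by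
    have hik := Finset.mem_Ioo.1 hk
    rw [Fin.lt_def, Fin.lt_def] at hik
    rw [hX.2 i k (σ k hk) j hik.1 (by simp [σ]; omega) (by simp [σ]; omega),
      hY.2 k j i (σ k hk) hik.2 (by simp [σ]; omega) (by simp [σ]; omega), mul_comm]
  refine Finset.sum_bij' σ σ ?_ ?_ ?_ ?_ hσ <;> intro k hk <;>
    simp only [σ, Finset.mem_Ioo, Fin.lt_def, Fin.ext_iff] at hk ⊢ <;> omega

lemma mul_eq_zero_of_mem_aAlg_two {X Y : Matrix (Fin 2) (Fin 2) F} (hX : X ∈ aAlg 2 F)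
    (hY : Y ∈ aAlg 2 F) : X * Y = 0 := by
  ext i j
  rw [mul_apply_eq_sum_Ioo hX.1 hY.1, Matrix.zero_apply]
  refine Finset.sum_eq_zero fun k hk => ?_
  simp only [Finset.mem_Ioo, Fin.lt_def] at hk
  omega

def superdiag (n a : ℕ) (c : F) : Matrix (Fin n) (Fin n) F :=
  Matrix.of fun i j => if (j : ℕ) = i + a then c else 0

lemma superdiag_mem_aAlg {a : ℕ} (ha : 0 < a) (c : F) : superdiag n a c ∈ aAlg n F := by
  refine ⟨fun i j hji => if_neg (by rw [Fin.le_def] at hji; omega),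
    fun i j i' j' _ _ h => ?_⟩
  simp only [superdiag, Matrix.of_apply]
  congr 1
  exact propext (by omega)

lemma superdiag_mul_superdiag (a b : ℕ) (c d : F) :
    superdiag n a c * superdiag n b d = superdiag n (a + b) (c * d) := by
  ext i j
  rw [Matrix.mul_apply]
  by_cases hij : (j : ℕ) = i + (a + b)
  · have hk : (i : ℕ) + a < n := by omega
    rw [Finset.sum_eq_single ⟨i + a, hk⟩ (fun k _ hk' => ?_) (by simp)]
    · simp [superdiag, hij, add_assoc]
    · simp only [superdiag, Matrix.of_apply, ne_eq, Fin.ext_iff] at hk' ⊢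
      rw [if_neg hk', zero_mul]
  · refine (Finset.sum_eq_zero fun k _ => ?_).trans (if_neg hij).symm
    simp only [superdiag, Matrix.of_apply, ite_mul, zero_mul, mul_ite, mul_zero]
    split_ifs <;> first | rfl | omega

lemma exists_kappaDual_mul_eq {F : Type} [Field F] [Fintype F] (hn : 2 < n) (c : F) :
    ∃ X Y : ↥(aAlg n F), kappaDual n (by omega) F (X * Y) = c := by
  refine ⟨⟨_, superdiag_mem_aAlg one_pos c⟩, ⟨_, superdiag_mem_aAlg (a := n - 2) (by omega) 1⟩, ?_⟩
  show (superdiag n 1 c * superdiag n (n - 2) 1 : Matrix (Fin n) (Fin n) F) _ _ = c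
  rw [superdiag_mul_superdiag]
  simp only [superdiag, Matrix.of_apply, mul_one]
  exact if_pos (by omega)

end SuperdiagonalConstant

theorem statement11_general (F : Type) [Field F] [Fintype F]
    (θ : AddChar F ℂ) (hθ : θ ≠ 1) (n : ℕ) (hn : 1 < n) :
    kirillov θ (kappaDual n hn F) = thetaFun θ (kappaDual n hn F) ∧
    (IsCharacter (kirillov θ (kappaDual n hn F)) ↔ n = 2) ∧
    ((∃ φ : ↥(grp (aAlg n F)) →* ℂˣ, ∀ g, thetaFun θ (kappaDual n hn F) g = φ g) ↔ n = 2) := by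
  have hkir : kirillov θ (kappaDual n hn F) = thetaFun θ (kappaDual n hn F) :=
    kirillov_eq_thetaFun_of_commute (fun _ hX _ hY => commute_of_mem_aAlg hX hY) θ _
  have hhom : (∃ φ : ↥(grp (aAlg n F)) →* ℂˣ, ∀ g, thetaFun θ (kappaDual n hn F) g = φ g)
      ↔ n = 2 := by
    rw [exists_monoidHom_thetaFun_iff aAlg_le_uAlg]
    constructor
    · intro h
      by_contra hn2
      obtain ⟨c, hc⟩ := AddChar.ne_one_iff.mp hθ
      obtain ⟨X, Y, hXY⟩ := exists_kappaDual_mul_eq (n := n) (by omega) c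
      exact hc (hXY ▸ h X Y)
    · rintro rfl X Y
      have hXY : X * Y = 0 := Subtype.ext (mul_eq_zero_of_mem_aAlg_two X.2 Y.2)
      rw [hXY, map_zero, AddChar.map_zero_eq_one]
  refine ⟨hkir, ?_, hhom⟩
  rw [hkir, isCharacter_iff_exists_monoidHom (thetaFun_one θ _), hhom]

/-- The Kirillov function `ψ_κ` of `A_n(q)` equals `θ_κ`, and it is a
character of `A_n(q)` if and only if `n = 2` (equivalently, `θ_κ` is a group homomorphism
to `ℂ^×` if and only if `n = 2`). -/
theorem statement11 (p : ℕ) (hp : p.Prime) (F : Type) [Field F] [Fintype F] [CharP F p]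
    (θ : AddChar F ℂ) (hθ : θ ≠ 1) (n : ℕ) (hn : 1 < n) :
    kirillov θ (kappaDual n hn F) = thetaFun θ (kappaDual n hn F) ∧
    (IsCharacter (kirillov θ (kappaDual n hn F)) ↔ n = 2) ∧
    ((∃ φ : ↥(grp (aAlg n F)) →* ℂˣ, ∀ g, thetaFun θ (kappaDual n hn F) g = φ g) ↔ n = 2) :=
  statement11_general F θ hθ n hn

end Paper
end
end

section
/- Let λ, μ ∈ u_n(q)* be quasi-monomial maps with the same shape. Then there exists an invertible diagonal matrix D ∈ GL_n(F_q) such that χ_μ(g) = χ_λ(D g D^{−1}) for all g ∈ UT_n(q). In other words, the group of automorphisms of UT_n(q) of the form g ↦ DgD^{−1} with D diagonal acts transitively on the set of supercharacters of UT_n(q) with a given shape. -/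
open scoped BigOperators Classical ComplexOrder
open Complex

set_option linter.unusedSectionVars false

noncomputable section

namespace Paper

variable {F : Type*} [Field F]

/-! ### Algebra groups of matrix algebras -/

variable {n : ℕ}

variable [Fintype F] {S : NonUnitalSubalgebra F (Matrix (Fin n) (Fin n) F)}

/-!
The nonzero entries `λ_ab` of a quasi-monomial `λ` are the edges `a → b` (with `a < b`) of a
disjoint union of increasing paths, whose vertex sets are the parts of the shape. Hence
`λ_ab ≠ 0` exactly when `b` is the successor of `a` in its part, so `λ` and `μ` have the same
nonzero positions. Multiplying the ratios `μ_ab / λ_ab` along the paths gives `d` with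
`μ_ab = d_a λ_ab d_b⁻¹`, i.e. `μ = λ(D · D⁻¹)` for `D = diag d`. Conjugation by `D` preserves
`u_n(q)`, carries two-sided orbits to two-sided orbits, and so transports `χ_λ` to `χ_μ`.
-/

section Relations

open Relation

variable {α : Type*} {r : α → α → Prop}

lemma reflTransGen_or_of_eqvGen (hr : Relator.RightUnique r) (hl : Relator.LeftUnique r)
    {i j : α} (h : EqvGen (fun a b => r a b ∨ r b a) i j) :
    ReflTransGen r i j ∨ ReflTransGen r j i := by
  induction h with
  | rel a b hab => exact hab.imp .single .single
  | refl a => exact .inl .refl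
  | symm a b _ ih => exact ih.symm
  | trans a b c _ _ ih₁ ih₂ =>
    rcases ih₁ with hab | hba <;> rcases ih₂ with hbc | hcb
    · exact .inl (hab.trans hbc)
    · have hl' : Relator.RightUnique (Function.swap r) := fun _ _ _ h₁ h₂ => hl h₁ h₂
      simpa only [reflTransGen_swap, or_comm] using
        ReflTransGen.total_of_right_unique hl' (reflTransGen_swap.2 hab)
          (reflTransGen_swap.2 hcb)
    · exact ReflTransGen.total_of_right_unique hr hba hbc
    · exact .inr (hcb.trans hba)

lemma eqvGen_eq_of_classes_eq {R₁ R₂ : α → α → Prop}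
    (h : {s | ∃ i, s = {j | EqvGen R₁ i j}} = {s | ∃ i, s = {j | EqvGen R₂ i j}}) :
    EqvGen R₁ = EqvGen R₂ := by
  have classes_eq : ∀ R : α → α → Prop,
      {s | ∃ i, s = {j | EqvGen R i j}} = (EqvGen.setoid R).classes := by
    intro R
    ext s
    refine exists_congr fun i => ?_
    rw [show {j | EqvGen R i j} = {j | EqvGen R j i} from
      Set.ext fun j => ⟨EqvGen.symm _ _, EqvGen.symm _ _⟩]
    rfl
  have hsetoid : EqvGen.setoid R₁ = EqvGen.setoid R₂ :=
    Setoid.classes_inj.2 (by rw [← classes_eq, ← classes_eq, h])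
  exact congrArg (fun s : Setoid α => (s : α → α → Prop)) hsetoid

variable [PartialOrder α]

lemma le_of_reflTransGen (hlt : ∀ a b, r a b → a < b) {a b : α} (h : ReflTransGen r a b) :
    a ≤ b := by
  induction h with
  | refl => exact le_rfl
  | tail _ hbc ih => exact ih.trans (hlt _ _ hbc).le

lemma rel_iff_succ_in_class (hlt : ∀ a b, r a b → a < b) (hr : Relator.RightUnique r)
    (hl : Relator.LeftUnique r) {i j : α} :
    r i j ↔ i < j ∧ EqvGen (fun a b => r a b ∨ r b a) i j ∧
      ∀ k, EqvGen (fun a b => r a b ∨ r b a) i k → i < k → j ≤ k := by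
  have reach_of_class : ∀ {k}, EqvGen (fun a b => r a b ∨ r b a) i k → i < k →
      ReflTransGen r i k := fun hk hik =>
    (reflTransGen_or_of_eqvGen hr hl hk).resolve_right
      fun hki => (hik.trans_le (le_of_reflTransGen hlt hki)).false
  constructor
  · intro hij
    refine ⟨hlt _ _ hij, .rel _ _ (.inl hij), fun k hk hik => ?_⟩
    rcases (reach_of_class hk hik).cases_head with rfl | ⟨j', hij', hj'k⟩
    · exact absurd hik (lt_irrefl _)
    · exact le_of_reflTransGen hlt (hr hij hij' ▸ hj'k)
  · rintro ⟨hij, hcls, hmin⟩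
    rcases (reach_of_class hcls hij).cases_head with rfl | ⟨k, hik, hkj⟩
    · exact absurd hij (lt_irrefl _)
    · have hk : EqvGen (fun a b => r a b ∨ r b a) i k :=
        hcls.trans _ _ _ (hcls.symm _ _ |>.trans _ _ _ (.rel _ _ (.inl hik)))
      rwa [le_antisymm (le_of_reflTransGen hlt hkj) (hmin k hk (hlt _ _ hik))] at hik

end Relations

section Entries

lemma lamEntry_eq {ν : Dual S} {i j : Fin n} (h : Matrix.single i j (1 : F) ∈ S) :
    lamEntry ν i j = ν ⟨_, h⟩ :=
  dif_pos h

lemma single_mem_uAlg {i j : Fin n} (h : i < j) (c : F) : Matrix.single i j c ∈ uAlg n F := by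
  rw [mem_uAlg]
  rintro a b hba
  rw [Matrix.single_apply_of_ne]
  rintro ⟨rfl, rfl⟩
  exact hba.not_gt h

lemma lamEntry_eq_zero_of_not_lt (ν : Dual (uAlg n F)) {i j : Fin n} (h : ¬ i < j) :
    lamEntry ν i j = 0 :=
  dif_neg fun hmem => one_ne_zero (α := F) <| by
    simpa using hmem i j (not_lt.1 h)

lemma lt_of_lamEntry_ne_zero {ν : Dual (uAlg n F)} {i j : Fin n} (h : lamEntry ν i j ≠ 0) :
    i < j :=
  not_not.1 fun hij => h (lamEntry_eq_zero_of_not_lt ν hij)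

lemma apply_single (ν : Dual (uAlg n F)) (i j : Fin n) (c : F)
    (h : Matrix.single i j c ∈ uAlg n F) : ν ⟨_, h⟩ = c * lamEntry ν i j := by
  by_cases hij : i < j
  · rw [lamEntry_eq (single_mem_uAlg hij 1), ← smul_eq_mul, ← map_smul]
    congr 1
    ext : 1
    simp [Matrix.smul_single]
  · have hc : c = 0 := by simpa using h i j (not_lt.1 hij)
    subst hc
    simp only [Matrix.single_zero, zero_mul]
    exact map_zero ν

lemma single_apply_mem_uAlg (X : uAlg n F) (i j : Fin n) :
    Matrix.single i j ((X : Matrix (Fin n) (Fin n) F) i j) ∈ uAlg n F := by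
  by_cases hij : i < j
  · exact single_mem_uAlg hij _
  · rw [X.2 i j (not_lt.1 hij), Matrix.single_zero]
    exact zero_mem _

lemma apply_eq_sum_lamEntry (ν : Dual (uAlg n F)) (X : uAlg n F) :
    ν X = ∑ i, ∑ j, (X : Matrix (Fin n) (Fin n) F) i j * lamEntry ν i j := by
  have hX : X = ∑ i, ∑ j, (⟨_, single_apply_mem_uAlg X i j⟩ : uAlg n F) := by
    ext : 1
    simpa only [AddSubmonoidClass.coe_finsetSum] using Matrix.matrix_eq_sum_single X.1
  conv_lhs => rw [hX]
  simp only [map_sum, apply_single]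

lemma ext_lamEntry {ν₁ ν₂ : Dual (uAlg n F)} (h : ∀ i j, lamEntry ν₁ i j = lamEntry ν₂ i j) :
    ν₁ = ν₂ :=
  LinearMap.ext fun X => by simp only [apply_eq_sum_lamEntry, h]

end Entries

section Conjugation

variable (D : (Matrix (Fin n) (Fin n) F)ˣ)

lemma inv_conj_mem (hD : ∀ X : Matrix (Fin n) (Fin n) F, D * X * D⁻¹ ∈ S ↔ X ∈ S)
    {X : Matrix (Fin n) (Fin n) F} (hX : X ∈ S) : D⁻¹ * X * D ∈ S :=
  (hD _).1 (by simpa [mul_assoc] using hX)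

variable (hD : ∀ X : Matrix (Fin n) (Fin n) F, D * X * D⁻¹ ∈ S ↔ X ∈ S)

def conjSub : S ≃ₗ[F] S where
  toFun X := ⟨D * X * D⁻¹, (hD X).2 X.2⟩
  invFun X := ⟨D⁻¹ * X * D, inv_conj_mem D hD X.2⟩
  map_add' X Y := by ext : 1; simp [mul_add, add_mul]
  map_smul' c X := by ext : 1; simp
  left_inv X := by ext : 1; simp [mul_assoc]
  right_inv X := by ext : 1; simp [mul_assoc]

lemma conjSub_apply (X : S) :
    (conjSub D hD X : Matrix (Fin n) (Fin n) F) = D * X * D⁻¹ := rfl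

lemma conj_sub_one (g : Matrix (Fin n) (Fin n) F) :
    D * g * D⁻¹ - 1 = D * (g - 1) * D⁻¹ := by
  simp [mul_sub, sub_mul]

def conjGrp : grp S ≃* grp S where
  toFun g := ⟨D * g * D⁻¹, by
    rw [mem_grp_iff, Units.val_mul, Units.val_mul, conj_sub_one]
    exact (hD _).2 g.2⟩
  invFun g := ⟨D⁻¹ * g * D, by
    rw [mem_grp_iff, Units.val_mul, Units.val_mul]
    convert inv_conj_mem D hD g.2 using 1
    simp [mul_sub, sub_mul]⟩
  left_inv g := by ext : 1; simp [mul_assoc]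
  right_inv g := by ext : 1; simp [mul_assoc]
  map_mul' g h := by ext : 1; simp [mul_assoc]

lemma gsub_conjGrp (g : grp S) : gsub (conjGrp D hD g) = conjSub D hD (gsub g) :=
  Subtype.ext (conj_sub_one D (mat g))

lemma thetaFun_dualMap_conjSub (θ : AddChar F ℂ) (ν : Dual S) (g : grp S) :
    thetaFun θ ((conjSub D hD).dualMap ν) g = thetaFun θ ν (conjGrp D hD g) := by
  rw [thetaFun, thetaFun, gsub_conjGrp]
  rfl

lemma conjDual_dualMap_conjSub (a b : grp S) (ν : Dual S) :
    conjDual a b ((conjSub D hD).dualMap ν) =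
      (conjSub D hD).dualMap (conjDual (conjGrp D hD a) (conjGrp D hD b) ν) := by
  ext X
  refine congrArg ν (Subtype.ext ?_)
  simp [conjSub_apply, mat, conjGrp, mul_assoc]

lemma leftOrbit_eq_range (ν : Dual S) : leftOrbit ν = Set.range fun g => conjDual g⁻¹ 1 ν := by
  ext; simp [leftOrbit, eq_comm]

lemma biOrbit_eq_range (ν : Dual S) :
    biOrbit ν = Set.range fun gh : grp S × grp S => conjDual gh.1⁻¹ gh.2⁻¹ ν := by
  ext; simp [biOrbit, eq_comm]

lemma leftOrbit_dualMap_conjSub (ν : Dual S) :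
    leftOrbit ((conjSub D hD).dualMap ν) = (conjSub D hD).dualMap '' leftOrbit ν := by
  simp only [leftOrbit_eq_range, conjDual_dualMap_conjSub, map_inv, map_one, ← Set.range_comp]
  exact (conjGrp D hD).surjective.range_comp
    (fun g => (conjSub D hD).dualMap (conjDual g⁻¹ 1 ν))

lemma biOrbit_dualMap_conjSub (ν : Dual S) :
    biOrbit ((conjSub D hD).dualMap ν) = (conjSub D hD).dualMap '' biOrbit ν := by
  simp only [biOrbit_eq_range, conjDual_dualMap_conjSub, map_inv, ← Set.range_comp]
  exact ((conjGrp D hD).surjective.prodMap (conjGrp D hD).surjective).range_comp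
    (fun gh => (conjSub D hD).dualMap (conjDual gh.1⁻¹ gh.2⁻¹ ν))

theorem superChar_dualMap_conjSub (θ : AddChar F ℂ) (ν : Dual S) (g : grp S) :
    superChar θ ((conjSub D hD).dualMap ν) g = superChar θ ν (conjGrp D hD g) := by
  have hinj := (conjSub D hD).dualMap.injective
  rw [superChar, superChar, leftOrbit_dualMap_conjSub, biOrbit_dualMap_conjSub,
    Nat.card_image_of_injective hinj, Nat.card_image_of_injective hinj,
    finsum_mem_image hinj.injOn]
  simp only [thetaFun_dualMap_conjSub]

end Conjugation

section Diagonal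

def diagUnit (d : Fin n → Fˣ) : (Matrix (Fin n) (Fin n) F)ˣ where
  val := Matrix.diagonal fun i => d i
  inv := Matrix.diagonal fun i => ↑(d i)⁻¹
  val_inv := by simp [Matrix.diagonal_mul_diagonal]
  inv_val := by simp [Matrix.diagonal_mul_diagonal]

lemma diagUnit_conj_apply (d : Fin n → Fˣ) (X : Matrix (Fin n) (Fin n) F) (i j : Fin n) :
    (diagUnit d * X * (diagUnit d)⁻¹ : Matrix (Fin n) (Fin n) F) i j =
      d i * X i j * ↑(d j)⁻¹ := by
  simp [diagUnit, Matrix.mul_diagonal, Matrix.diagonal_mul]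

lemma diagUnit_conj_mem_uAlg_iff (d : Fin n → Fˣ) (X : Matrix (Fin n) (Fin n) F) :
    diagUnit d * X * (diagUnit d)⁻¹ ∈ uAlg n F ↔ X ∈ uAlg n F := by
  simp only [mem_uAlg, diagUnit_conj_apply, mul_eq_zero, Units.ne_zero, or_false, false_or]

lemma lamEntry_dualMap_conjSub_diagUnit (d : Fin n → Fˣ) (ν : Dual (uAlg n F))
    (i j : Fin n) :
    lamEntry ((conjSub (diagUnit d) (diagUnit_conj_mem_uAlg_iff d)).dualMap ν) i j =
      d i * lamEntry ν i j * ↑(d j)⁻¹ := by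
  by_cases hij : i < j
  · have hconj :
        conjSub (diagUnit d) (diagUnit_conj_mem_uAlg_iff d) ⟨_, single_mem_uAlg hij 1⟩ =
          ⟨_, single_mem_uAlg hij ((d i : F) * ↑(d j)⁻¹)⟩ := by
      ext a b
      rw [conjSub_apply, diagUnit_conj_apply]
      simp only [Matrix.single_apply]
      split_ifs with h <;> simp [h]
    rw [lamEntry_eq (single_mem_uAlg hij 1), LinearEquiv.dualMap_apply, hconj,
      apply_single]
    ring
  · simp [lamEntry_eq_zero_of_not_lt _ hij]

end Diagonal

section PathProduct

open Relation

variable {α M : Type*} [Fintype α] (r : α → α → Prop)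

def pathProd [CommMonoid M] (w : α → α → M) (i : α) : M :=
  ∏ e ∈ Finset.univ.filter (fun e : α × α => r e.1 e.2 ∧ ReflTransGen r i e.1), w e.1 e.2

variable {r}

lemma pathProd_of_rel [CommMonoid M] [PartialOrder α] (hlt : ∀ a b, r a b → a < b)
    (hr : Relator.RightUnique r) (w : α → α → M) {i j : α} (hij : r i j) :
    pathProd r w i = w i j * pathProd r w j := by
  have hedges : Finset.univ.filter (fun e : α × α => r e.1 e.2 ∧ ReflTransGen r i e.1) =
      insert (i, j) (Finset.univ.filter fun e : α × α => r e.1 e.2 ∧ ReflTransGen r j e.1) := by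
    ext ⟨a, b⟩
    simp only [Finset.mem_filter, Finset.mem_univ, true_and, Finset.mem_insert, Prod.mk.injEq]
    constructor
    · rintro ⟨hab, hia⟩
      rcases hia.cases_head with rfl | ⟨k, hik, hka⟩
      · exact .inl ⟨rfl, hr hab hij⟩
      · exact .inr ⟨hab, hr hik hij ▸ hka⟩
    · rintro (⟨rfl, rfl⟩ | ⟨hab, hja⟩)
      · exact ⟨hij, .refl⟩
      · exact ⟨hab, .head hij hja⟩
  have hnot :
      (i, j) ∉ Finset.univ.filter fun e : α × α => r e.1 e.2 ∧ ReflTransGen r j e.1 := by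
    simp only [Finset.mem_filter, Finset.mem_univ, true_and, not_and]
    exact fun _ hji => (hlt i j hij).not_ge (le_of_reflTransGen hlt hji)
  rw [pathProd, hedges, Finset.prod_insert hnot, pathProd]

lemma pathProd_ne_zero [CommMonoidWithZero M] [NoZeroDivisors M] [Nontrivial M]
    {w : α → α → M} (hw : ∀ a b, r a b → w a b ≠ 0) (i : α) : pathProd r w i ≠ 0 :=
  Finset.prod_ne_zero_iff.2 fun _ he => hw _ _ (Finset.mem_filter.1 he).2.1

end PathProduct

section Shape

variable {lam mu : Dual (uAlg n F)}

lemma lamEntry_ne_zero_iff_succ_in_class (hlam : QuasiMonomial lam) {i j : Fin n} :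
    lamEntry lam i j ≠ 0 ↔ i < j ∧
      Relation.EqvGen (fun a b => lamEntry lam a b ≠ 0 ∨ lamEntry lam b a ≠ 0) i j ∧
      ∀ k, Relation.EqvGen (fun a b => lamEntry lam a b ≠ 0 ∨ lamEntry lam b a ≠ 0) i k →
        i < k → j ≤ k :=
  rel_iff_succ_in_class (fun _ _ => lt_of_lamEntry_ne_zero) (fun _ _ _ => hlam.1 _ _ _)
    (fun _ _ _ => hlam.2 _ _ _)

lemma lamEntry_ne_zero_iff_of_shapeClasses_eq (hlam : QuasiMonomial lam)
    (hmu : QuasiMonomial mu) (hshape : shapeClasses lam = shapeClasses mu) (i j : Fin n) :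
    lamEntry lam i j ≠ 0 ↔ lamEntry mu i j ≠ 0 := by
  rw [lamEntry_ne_zero_iff_succ_in_class hlam, lamEntry_ne_zero_iff_succ_in_class hmu,
    eqvGen_eq_of_classes_eq hshape]

/-- `d i` is the product of the ratios `μ_ab / λ_ab` along the path of `λ` starting at `i`,
so that `d_a = (μ_ab / λ_ab) d_b` along every edge. -/
lemma exists_eq_dualMap_conjSub_diagUnit (hlam : QuasiMonomial lam) (hmu : QuasiMonomial mu)
    (hshape : shapeClasses lam = shapeClasses mu) :
    ∃ d : Fin n → Fˣ,
      mu = (conjSub (diagUnit d) (diagUnit_conj_mem_uAlg_iff d)).dualMap lam := by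
  have hsupp := lamEntry_ne_zero_iff_of_shapeClasses_eq hlam hmu hshape
  obtain ⟨c, hc_step, hc⟩ : ∃ c : Fin n → F,
      (∀ a b, lamEntry lam a b ≠ 0 → c a = lamEntry mu a b / lamEntry lam a b * c b) ∧
        ∀ i, c i ≠ 0 :=
    ⟨_, fun a b => pathProd_of_rel (fun _ _ => lt_of_lamEntry_ne_zero)
      (fun _ _ _ => hlam.1 _ _ _) _,
      pathProd_ne_zero fun a b hab => div_ne_zero ((hsupp a b).1 hab) hab⟩
  refine ⟨fun i => Units.mk0 (c i) (hc i), ext_lamEntry fun a b => ?_⟩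
  rw [lamEntry_dualMap_conjSub_diagUnit, Units.val_inv_eq_inv_val, Units.val_mk0,
    Units.val_mk0]
  by_cases hab : lamEntry lam a b = 0
  · rw [hab, mul_zero, zero_mul]
    exact not_not.1 fun h => (hsupp a b).2 h hab
  · rw [hc_step a b hab]
    field_simp [hc b]

end Shape

theorem statement15_general (F : Type) [Field F] [Fintype F]
    (θ : AddChar F ℂ) (n : ℕ)
    (lam mu : Dual (uAlg n F)) (hlam : QuasiMonomial lam) (hmu : QuasiMonomial mu)
    (hshape : shapeClasses lam = shapeClasses mu) :
    ∃ D : (Matrix (Fin n) (Fin n) F)ˣ,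
      (∀ i j : Fin n, i ≠ j → (D : Matrix (Fin n) (Fin n) F) i j = 0) ∧
      ∀ g : ↥(grp (uAlg n F)), ∃ h : ↥(grp (uAlg n F)),
        (h : (Matrix (Fin n) (Fin n) F)ˣ) = D * (g : (Matrix (Fin n) (Fin n) F)ˣ) * D⁻¹ ∧
        superChar θ mu g = superChar θ lam h := by
  obtain ⟨d, rfl⟩ := exists_eq_dualMap_conjSub_diagUnit hlam hmu hshape
  refine ⟨diagUnit d, fun i j hij => Matrix.diagonal_apply_ne _ hij, fun g => ?_⟩
  exact ⟨conjGrp _ (diagUnit_conj_mem_uAlg_iff d) g, rfl,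
    superChar_dualMap_conjSub _ _ θ lam g⟩

/-- If `λ, μ ∈ u_n(q)*` are quasi-monomial with the same shape, then
there is an invertible diagonal matrix `D` with `χ_μ(g) = χ_λ(D g D⁻¹)` for all
`g ∈ UT_n(q)`. -/
theorem statement15 (p : ℕ) (hp : p.Prime) (F : Type) [Field F] [Fintype F] [CharP F p]
    (θ : AddChar F ℂ) (hθ : θ ≠ 1) (n : ℕ)
    (lam mu : Dual (uAlg n F)) (hlam : QuasiMonomial lam) (hmu : QuasiMonomial mu)
    (hshape : shapeClasses lam = shapeClasses mu) :
    ∃ D : (Matrix (Fin n) (Fin n) F)ˣ,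
      (∀ i j : Fin n, i ≠ j → (D : Matrix (Fin n) (Fin n) F) i j = 0) ∧
      ∀ g : ↥(grp (uAlg n F)), ∃ h : ↥(grp (uAlg n F)),
        (h : (Matrix (Fin n) (Fin n) F)ˣ) = D * (g : (Matrix (Fin n) (Fin n) F)ˣ) * D⁻¹ ∧
        superChar θ mu g = superChar θ lam h :=
  statement15_general F θ n lam mu hlam hmu hshape

end Paper
end
end
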